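/- Let m be a locally doubling flow measure on a tree rooted at infinity. Then m is doubling if and only if sup_{γ ∈ Γ} n(γ) < ∞. -/

import Mathlib

open scoped ENNReal NNReal BigOperators

universe u

namespace FlowPaper

/-- A tree rooted at infinity: vertex set `V`, level function `lvl`, predecessor `pred`. -/
structure Tree (V : Type u) where
  lvl : V → ℤ
  pred : V → V
  lvl_pred : ∀ x, lvl (pred x) = lvl x + 1
  sons_fin : ∀ x, {y : V | pred y = x}.Finite
  sons_ne : ∀ x, ∃ y, pred y = x
  conn : ∀ x y, ∃ k l : ℕ, pred^[k] x = pred^[l] y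

variable {V : Type u}

namespace Tree

/-- The (finite) set of sons of a vertex. -/
noncomputable def sons (T : Tree V) (x : V) : Finset V := (T.sons_fin x).toFinset

/-- The number of sons `q(x)` of a vertex. -/
noncomputable def deg (T : Tree V) (x : V) : ℕ := (T.sons x).card

/-- The partial order: `x ≤ y` iff `y` is an iterated predecessor of `x`. -/
def Le (T : Tree V) (x y : V) : Prop := ∃ k : ℕ, T.pred^[k] x = y

/-- The geodesic distance: the least `k + l` with `p^[k] x = p^[l] y`. -/
noncomputable def dist (T : Tree V) (x y : V) : ℕ :=
  sInf {n : ℕ | ∃ k l : ℕ, k + l = n ∧ T.pred^[k] x = T.pred^[l] y}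

/-- The closed ball of radius `r` about `x`. -/
def ball (T : Tree V) (x : V) (r : ℕ) : Set V := {y | T.dist x y ≤ r}

/-- The sphere of radius `r` about `x`. -/
def sphere (T : Tree V) (x : V) (r : ℕ) : Set V := {y | T.dist x y = r}

/-- Adjacency: `x ~ y` iff one is the predecessor of the other. -/
def Adj (T : Tree V) (x y : V) : Prop := T.pred x = y ∨ T.pred y = x

/-- The trapezoid `R_{h1}^{h2}(x0)`. -/
def trap (T : Tree V) (x0 : V) (h1 h2 : ℕ) : Set V :=
  {x | T.Le x x0 ∧ T.lvl x0 - h2 < T.lvl x ∧ T.lvl x ≤ T.lvl x0 - h1}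

end Tree

/-- The measure of a subset of vertices. -/
noncomputable def mst (m : V → ℝ≥0∞) (A : Set V) : ℝ≥0∞ := ∑' x : A, m x

/-- `m` is a flow measure: positive, finite at each vertex, and the value at a
vertex is the sum of the values at its sons. -/
structure IsFlow (T : Tree V) (m : V → ℝ≥0∞) : Prop where
  pos : ∀ x, 0 < m x
  fin : ∀ x, m x < ⊤
  flow : ∀ x, m x = ∑ y ∈ T.sons x, m y

/-- `m` is locally doubling. -/
def LocDoubling (T : Tree V) (m : V → ℝ≥0∞) : Prop :=
  ∀ r : ℕ, 0 < r → ∃ C : ℝ, 1 < C ∧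
    ∀ x : V, mst m (T.ball x (2 * r)) ≤ ENNReal.ofReal C * mst m (T.ball x r)

/-- `m` is (globally) doubling. -/
def Doubling (T : Tree V) (m : V → ℝ≥0∞) : Prop :=
  ∃ C : ℝ, 1 < C ∧ ∀ (r : ℕ) (x : V), 0 < r →
    mst m (T.ball x (2 * r)) ≤ ENNReal.ofReal C * mst m (T.ball x r)

/-- Admissible trapezoid (with respect to the parameter `β`): a singleton, or a
trapezoid `R_{h1}^{h2}(x)` with `2 ≤ h2 / h1 ≤ β`. -/
def IsAdmissible (T : Tree V) (β : ℝ) (R : Set V) : Prop :=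
  (∃ x : V, R = {x}) ∨
  ∃ (x : V) (h1 h2 : ℕ), 1 ≤ h1 ∧ 2 * h1 ≤ h2 ∧ (h2 : ℝ) ≤ β * h1 ∧ R = T.trap x h1 h2

/-- `∫_A |f| dm`. -/
noncomputable def intNN (m : V → ℝ≥0∞) (A : Set V) (f : V → ℂ) : ℝ≥0∞ :=
  ∑' x : A, (‖f x‖₊ : ℝ≥0∞) * m x

/-- `∫_A f dm`. -/
noncomputable def intC (m : V → ℝ≥0∞) (A : Set V) (f : V → ℂ) : ℂ :=
  ∑' x : A, f x * ((m x).toReal : ℂ)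

/-- The average `f_A = (1/m(A)) ∫_A f dm`. -/
noncomputable def avg (m : V → ℝ≥0∞) (A : Set V) (f : V → ℂ) : ℂ :=
  intC m A f / (((mst m A).toReal : ℝ) : ℂ)

/-- `L^p` norm of an `ℝ≥0∞`-valued function, `0 < p < ∞`. -/
noncomputable def lpNormE (m : V → ℝ≥0∞) (p : ℝ) (g : V → ℝ≥0∞) : ℝ≥0∞ :=
  (∑' x : V, g x ^ p * m x) ^ (1 / p)

/-- `L^p` norm, `0 < p < ∞`. -/
noncomputable def lpNorm (m : V → ℝ≥0∞) (p : ℝ) (f : V → ℂ) : ℝ≥0∞ :=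
  lpNormE m p (fun x => (‖f x‖₊ : ℝ≥0∞))

/-- `L^∞` norm. -/
noncomputable def linfNorm (f : V → ℂ) : ℝ≥0∞ := ⨆ x : V, (‖f x‖₊ : ℝ≥0∞)

/-- The Hardy–Littlewood maximal function associated with admissible trapezoids. -/
noncomputable def maximal (T : Tree V) (β : ℝ) (m : V → ℝ≥0∞) (f : V → ℂ) (x : V) : ℝ≥0∞ :=
  ⨆ (R : Set V) (_ : IsAdmissible T β R ∧ x ∈ R), (mst m R)⁻¹ * intNN m R f

/-- The `BMO_q` seminorm. -/
noncomputable def oscNorm (T : Tree V) (β : ℝ) (m : V → ℝ≥0∞) (q : ℝ) (f : V → ℂ) : ℝ≥0∞ :=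
  ⨆ (R : Set V) (_ : IsAdmissible T β R),
    ((mst m R)⁻¹ * ∑' x : R, (‖f x - avg m R f‖₊ : ℝ≥0∞) ^ q * m x) ^ (1 / q)

/-- The sharp maximal function. -/
noncomputable def sharpMaximal (T : Tree V) (β : ℝ) (m : V → ℝ≥0∞) (f : V → ℂ) (x : V) :
    ℝ≥0∞ :=
  ⨆ (R : Set V) (_ : IsAdmissible T β R ∧ x ∈ R),
    (mst m R)⁻¹ * ∑' y : R, (‖f y - avg m R f‖₊ : ℝ≥0∞) * m y

/-- A `(1,p)`-atom, `1 < p < ∞`. -/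
def IsAtomP (T : Tree V) (β : ℝ) (m : V → ℝ≥0∞) (p : ℝ) (a : V → ℂ) : Prop :=
  ∃ R : Set V, IsAdmissible T β R ∧ (∀ x ∉ R, a x = 0) ∧
    lpNorm m p a ≤ (mst m R) ^ (1 / p - 1) ∧ intC m R a = 0

/-- A `(1,∞)`-atom. -/
def IsAtomInf (T : Tree V) (β : ℝ) (m : V → ℝ≥0∞) (a : V → ℂ) : Prop :=
  ∃ R : Set V, IsAdmissible T β R ∧ (∀ x ∉ R, a x = 0) ∧
    linfNorm a ≤ (mst m R)⁻¹ ∧ intC m R a = 0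

/-- An atomic decomposition `f = Σ_j λ_j a_j` converging in `L¹(m)`. -/
def IsDecomp (m : V → ℝ≥0∞) (atom : (V → ℂ) → Prop) (f : V → ℂ)
    (lam : ℕ → ℂ) (a : ℕ → V → ℂ) : Prop :=
  (∀ j, atom (a j)) ∧ Summable (fun j => ‖lam j‖) ∧
  Filter.Tendsto
    (fun N => lpNorm m 1 (fun x => f x - ∑ j ∈ Finset.range N, lam j * a j x))
    Filter.atTop (nhds (0 : ℝ≥0∞))

/-- The atomic Hardy norm associated with the given class of atoms. -/
noncomputable def hNorm (m : V → ℝ≥0∞) (atom : (V → ℂ) → Prop) (f : V → ℂ) : ℝ≥0∞ :=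
  ⨅ (d : {la : (ℕ → ℂ) × (ℕ → V → ℂ) // IsDecomp m atom f la.1 la.2}),
    ENNReal.ofReal (∑' j, ‖d.1.1 j‖)

/-- A (finite) geodesic: pairwise distinct vertices, consecutive ones adjacent. -/
def IsGeodesic (T : Tree V) (l : List V) : Prop := l.Nodup ∧ l.Chain' T.Adj

/-- The number of vertices with at least two sons along a geodesic. -/
noncomputable def branchCount (T : Tree V) (l : List V) : ℕ :=
  List.countP (fun y => decide (2 ≤ T.deg y)) l

/-- The lower half-ball `B_r^-(x0)`. -/
def lowerBall (T : Tree V) (x0 : V) (r : ℕ) : Set V := {x | T.Le x x0 ∧ T.dist x x0 ≤ r}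

/-- The boundary `∂A` of a set of vertices. -/
def bdry (T : Tree V) (A : Set V) : Set V := {x ∈ A | ∃ y ∉ A, T.Adj y x}

/-- Trapezoids as labelled data: a singleton, or the data `(x, h1, h2)`. -/
inductive TrapZ (V : Type u) where
  | single (x : V)
  | tz (x : V) (h1 h2 : ℕ)

namespace TrapZ

/-- The vertex set of a labelled trapezoid. -/
def toSet (T : Tree V) : TrapZ V → Set V
  | single x => {x}
  | tz x h1 h2 => T.trap x h1 h2

/-- Admissibility of a labelled trapezoid. -/
def Adm (β : ℝ) : TrapZ V → Prop
  | single _ => True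
  | tz _ h1 h2 => 1 ≤ h1 ∧ 2 * h1 ≤ h2 ∧ (h2 : ℝ) ≤ β * h1

/-- The root of a labelled trapezoid. -/
def root : TrapZ V → V
  | single x => x
  | tz x _ _ => x

end TrapZ

/-- One step of the decomposition algorithm: the family `ℱ(R,1)`. -/
def children (T : Tree V) : TrapZ V → Set (TrapZ V)
  | .single x => {.single x}
  | .tz x h1 h2 =>
    if h1 = 1 ∧ h2 = 2 then {Q | ∃ y ∈ T.sons x, Q = .single y}
    else if (h1 = 1 ∧ h2 = 3) ∨ 4 * h1 ≤ h2 then {.tz x h1 (2 * h1), .tz x (2 * h1) h2}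
    else {Q | ∃ y ∈ T.sons x, Q = .tz y (h1 - 1) (h2 - 1)}

/-- `R'` is an output of the expansion algorithm applied to `R`. -/
def IsExpansion (T : Tree V) : TrapZ V → TrapZ V → Prop
  | .single x, R' => R' = .tz (T.pred x) 1 2
  | .tz x h1 h2, R' =>
    if h1 = 1 ∧ h2 = 2 then R' = .tz (T.pred x) 1 3
    else if 3 * h1 ≤ h2 then R' = .tz (T.pred x) (h1 + 1) (h2 + 1)
    else R' = .tz x h1 (2 * h2) ∨ R' = .tz x (h1 / 2) h2

/-- The dyadic maximal function associated with a family `D` of partitions. -/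
noncomputable def dyadicMaximal (m : V → ℝ≥0∞) (D : ℤ → Set (Set V)) (f : V → ℂ) (x : V) :
    ℝ≥0∞ :=
  ⨆ (R : Set V) (_ : (∃ j, R ∈ D j) ∧ x ∈ R), (mst m R)⁻¹ * intNN m R f

/-- A dyadic family of partitions of `V` into admissible trapezoids. -/
def IsDyadicFamily (T : Tree V) (β : ℝ) (m : V → ℝ≥0∞) (c Ct : ℝ)
    (D : ℤ → Set (Set V)) : Prop :=
  (∀ j, (∀ R ∈ D j, IsAdmissible T β R) ∧ (D j).Pairwise Disjoint ∧ ⋃₀ (D j) = Set.univ) ∧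
  (∀ j k : ℤ, j < k → ∀ R ∈ D j, ∀ R' ∈ D k, R ⊆ R' ∨ R ∩ R' = ∅) ∧
  (∀ j, ∀ R ∈ D j, ∃! R', R' ∈ D (j + 1) ∧ R ⊆ R') ∧
  (∀ j, ∀ R ∈ D j, ∀ R' ∈ D (j + 1), R ⊆ R' → mst m R' ≤ ENNReal.ofReal Ct * mst m R) ∧
  (∀ j, ∀ R ∈ D j, ∃ F : Finset (Set V), ↑F ⊆ D (j - 1) ∧ (F.card : ℝ) ≤ c ∧ R = ⋃₀ ↑F) ∧
  (∀ x : V, ∃ k : ℤ, ∀ j ≤ k, {x} ∈ D j)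

end FlowPaper
namespace FlowPaper

variable {V : Type u}

section Aux

variable (T : Tree V) (m : V → ℝ≥0∞)

lemma lvl_up (x : V) : ∀ j : ℕ, T.lvl (T.pred^[j] x) = T.lvl x + j := by
  intro j; induction j with
  | zero => simp
  | succ n ih => rw [Function.iterate_succ_apply', T.lvl_pred, ih]; push_cast; ring

lemma up_inj (x : V) : Function.Injective (fun j : ℕ => T.pred^[j] x) := by
  intro i j h
  have h' : T.pred^[i] x = T.pred^[j] x := h
  have := lvl_up T x i
  rw [h', lvl_up T x j] at this
  exact_mod_cast (by omega : (T.lvl x + i : ℤ) = T.lvl x + j → (i:ℤ) = j) this.symm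

lemma mem_sons {y x : V} : y ∈ T.sons x ↔ T.pred y = x := by
  simp [Tree.sons, Set.Finite.mem_toFinset]

lemma exists_desc (z : V) : ∀ d : ℕ, ∃ u, T.pred^[d] u = z := by
  intro d; induction d with
  | zero => exact ⟨z, rfl⟩
  | succ n ih =>
    obtain ⟨u, hu⟩ := ih
    obtain ⟨u', hu'⟩ := T.sons_ne u
    exact ⟨u', by rw [Function.iterate_succ_apply, hu', hu]⟩

lemma mono_step (hm : IsFlow T m) (x : V) : m x ≤ m (T.pred x) := by
  rw [hm.flow (T.pred x)]
  exact Finset.single_le_sum (fun y _ => zero_le) ((mem_sons T).2 rfl)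

lemma mono_iter (hm : IsFlow T m) (x : V) {i j : ℕ} (h : i ≤ j) :
    m (T.pred^[i] x) ≤ m (T.pred^[j] x) := by
  induction j with
  | zero => simp_all
  | succ n ih =>
    rcases Nat.lt_or_ge i (n+1) with h' | h'
    · rw [Function.iterate_succ_apply']
      exact (ih (by omega)).trans (mono_step T m hm _)
    · have : i = n + 1 := by omega
      subst this; exact le_rfl

lemma mst_singleton (z : V) : mst m {z} = m z := by
  simp [mst]

lemma mst_mono {A B : Set V} (h : A ⊆ B) : mst m A ≤ mst m B := by
  rw [mst, mst, tsum_subtype A m, tsum_subtype B m]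
  exact ENNReal.tsum_le_tsum (Set.indicator_le_indicator_of_subset h (fun _ => zero_le))

lemma mst_finset (F : Finset V) : mst m (↑F : Set V) = ∑ x ∈ F, m x := by
  rw [mst, Finset.tsum_subtype' F m]

end Aux

end FlowPaper
namespace FlowPaper

variable {V : Type u}

section Aux2

variable (T : Tree V) (m : V → ℝ≥0∞)

attribute [local instance] Classical.decEq

lemma dist_le {x y : V} {k l : ℕ} (h : T.pred^[k] x = T.pred^[l] y) :
    T.dist x y ≤ k + l :=
  Nat.sInf_le ⟨k, l, rfl, h⟩

lemma dist_spec {x y : V} {r : ℕ} (h : T.dist x y ≤ r) :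
    ∃ k l : ℕ, k + l ≤ r ∧ T.pred^[k] x = T.pred^[l] y := by
  have hne : {n : ℕ | ∃ k l : ℕ, k + l = n ∧ T.pred^[k] x = T.pred^[l] y}.Nonempty := by
    obtain ⟨k, l, hkl⟩ := T.conn x y
    exact ⟨k + l, k, l, rfl, hkl⟩
  obtain ⟨k, l, hkl, h'⟩ := Nat.sInf_mem hne
  exact ⟨k, l, by rw [hkl]; exact h, h'⟩

lemma up_mem_ball (x : V) {j r : ℕ} (h : j ≤ r) : T.pred^[j] x ∈ T.ball x r := by
  have : T.dist x (T.pred^[j] x) ≤ j + 0 := dist_le T (by simp)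
  exact le_trans this (by omega)

/-- descendants of `z` at depth exactly `t`. -/
noncomputable def Dfin (z : V) : ℕ → Finset V
  | 0 => {z}
  | t + 1 => (Dfin z t).biUnion T.sons

lemma Dfin_zero (z : V) : Dfin T z 0 = {z} := rfl

lemma Dfin_succ (z : V) (t : ℕ) : Dfin T z (t + 1) = (Dfin T z t).biUnion T.sons := rfl

lemma mem_Dfin (z : V) : ∀ (t : ℕ) (y : V), y ∈ Dfin T z t ↔ T.pred^[t] y = z := by
  intro t; induction t with
  | zero => intro y; rw [Dfin_zero]; simp [eq_comm]
  | succ n ih =>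
    intro y
    rw [Dfin_succ]
    simp only [Finset.mem_biUnion]
    constructor
    · rintro ⟨w, hw, hy⟩
      rw [Function.iterate_succ_apply, (mem_sons T).1 hy]
      exact (ih w).1 hw
    · intro h
      exact ⟨T.pred y, (ih _).2 (by rwa [← Function.iterate_succ_apply]),
        (mem_sons T).2 rfl⟩

lemma sum_Dfin (hm : IsFlow T m) (z : V) : ∀ t : ℕ, ∑ y ∈ Dfin T z t, m y = m z := by
  intro t; induction t with
  | zero => rw [Dfin_zero]; simp
  | succ n ih =>
    rw [Dfin_succ, Finset.sum_biUnion, ← ih]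
    · exact Finset.sum_congr rfl (fun w _ => (hm.flow w).symm)
    · intro a _ b _ hab
      simp only [Finset.disjoint_left]
      intro y hy hy'
      exact hab (((mem_sons T).1 hy).symm.trans ((mem_sons T).1 hy'))

lemma ball_lb (x : V) (r : ℕ) :
    ∑ j ∈ Finset.range (r + 1), m (T.pred^[j] x) ≤ mst m (T.ball x r) := by
  have : ∑ j ∈ Finset.range (r + 1), m (T.pred^[j] x)
      = ∑ y ∈ (Finset.range (r + 1)).image (fun j => T.pred^[j] x), m y := by
    rw [Finset.sum_image]
    intro a _ b _ h
    exact up_inj T x h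
  rw [this, ← mst_finset]
  apply mst_mono
  intro y hy
  simp only [Finset.coe_image, Set.mem_image, Finset.coe_range, Set.mem_Iio] at hy
  obtain ⟨j, hj, rfl⟩ := hy
  exact up_mem_ball T x (by omega)

lemma ball_ub (hm : IsFlow T m) (x : V) (r : ℕ) :
    mst m (T.ball x r) ≤ (2 * r + 1 : ℕ) * m (T.pred^[r] x) := by
  set z := T.pred^[r] x with hz
  have hsub : T.ball x r ⊆ ↑((Finset.range (2 * r + 1)).biUnion (fun t => Dfin T z t)) := by
    intro y hy
    obtain ⟨k, l, hkl, h⟩ := dist_spec T hy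
    simp only [Finset.coe_biUnion, Set.mem_iUnion, Finset.mem_coe, Finset.mem_range]
    refine ⟨l + (r - k), by omega, (mem_Dfin T z _ y).2 ?_⟩
    rw [Nat.add_comm l, Function.iterate_add_apply, ← h, ← Function.iterate_add_apply, hz]
    congr 1; omega
  refine (mst_mono m hsub).trans ?_
  rw [mst_finset]
  calc ∑ y ∈ (Finset.range (2 * r + 1)).biUnion (fun t => Dfin T z t), m y
      ≤ ∑ t ∈ Finset.range (2 * r + 1), ∑ y ∈ Dfin T z t, m y := by
        rw [Finset.sum_biUnion]
        intro a ha b hb hab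
        simp only [Finset.disjoint_left]
        intro y hy hy'
        have h1 := (mem_Dfin T z a y).1 hy
        have h2 := (mem_Dfin T z b y).1 hy'
        apply hab
        have := lvl_up T y a
        rw [h1, ← h2, lvl_up T y b] at this
        have : (a : ℤ) = b := by omega
        exact_mod_cast this
    _ = (2 * r + 1 : ℕ) * m z := by
        rw [Finset.sum_congr rfl (fun t _ => sum_Dfin T m hm z t)]
        simp [Finset.sum_const, nsmul_eq_mul]

end Aux2

end FlowPaper
namespace FlowPaper

variable {V : Type u}

section Aux3

variable (T : Tree V) (m : V → ℝ≥0∞)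

attribute [local instance] Classical.decEq

/-- From local doubling: a uniform bound on `m (pred y) / m y`. -/
lemma exists_A (hm : IsFlow T m) (hld : LocDoubling T m) :
    ∃ A : ℝ, 1 ≤ A ∧ ∀ y : V, m (T.pred y) ≤ ENNReal.ofReal A * m y := by
  obtain ⟨C, hC, hC2⟩ := hld 1 one_pos
  refine ⟨3 * C, by linarith, fun y => ?_⟩
  obtain ⟨x, hx⟩ := T.sons_ne y
  have h1 : m (T.pred y) ≤ mst m (T.ball x (2 * 1)) := by
    refine le_trans ?_ (ball_lb T m x (2 * 1))
    have h2m : (2 : ℕ) ∈ Finset.range (2 * 1 + 1) := by norm_num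
    have := Finset.single_le_sum (f := fun j => m (T.pred^[j] x))
      (fun j _ => zero_le) h2m
    simpa [Function.iterate_succ_apply, hx] using this
  have h2' : mst m (T.ball x 1) ≤ (3 : ℕ) * m y := by
    simpa [hx] using ball_ub T m hm x 1
  calc m (T.pred y) ≤ mst m (T.ball x (2 * 1)) := h1
    _ ≤ ENNReal.ofReal C * mst m (T.ball x 1) := hC2 x
    _ ≤ ENNReal.ofReal C * ((3:ℕ) * m y) := mul_le_mul_right h2' _
    _ = ENNReal.ofReal (3 * C) * m y := by
        have h3 : ((3:ℕ) : ℝ≥0∞) = ENNReal.ofReal 3 := by norm_num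
        rw [h3, ENNReal.ofReal_mul (by norm_num : (0:ℝ) ≤ 3), ← mul_assoc,
          mul_comm (ENNReal.ofReal C) (ENNReal.ofReal 3)]

/-- number of branch points at positions `1,…,n` above `y`. -/
noncomputable def bc (y : V) (n : ℕ) : ℕ :=
  (List.range n).countP (fun s => decide (2 ≤ T.deg (T.pred^[s + 1] y)))

lemma bc_zero (y : V) : bc T y 0 = 0 := rfl

lemma bc_succ (y : V) (n : ℕ) :
    bc T y (n + 1) = bc T y n + (if 2 ≤ T.deg (T.pred^[n + 1] y) then 1 else 0) := by
  unfold bc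
  rw [List.range_succ, List.countP_append]
  simp [List.countP_cons]
  by_cases h : 2 ≤ T.deg (T.pred^[n] (T.pred y)) <;> simp [h]

lemma bc_mono (y : V) {n n' : ℕ} (h : n ≤ n') : bc T y n ≤ bc T y n' := by
  induction n' with
  | zero => simp_all [bc_zero]
  | succ k ih =>
    rcases Nat.lt_or_ge n (k+1) with h' | h'
    · exact (ih (by omega)).trans (by rw [bc_succ]; omega)
    · have : n = k + 1 := by omega
      subst this; exact le_rfl

lemma deg_one_step (hm : IsFlow T m) {x : V} (h : T.deg (T.pred x) ≤ 1) :
    m (T.pred x) = m x := by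
  have hx : x ∈ T.sons (T.pred x) := (mem_sons T).2 rfl
  have : T.sons (T.pred x) = {x} := by
    apply Finset.eq_singleton_iff_unique_mem.2
    refine ⟨hx, fun b hb => ?_⟩
    by_contra hne
    have h2 : 1 < (T.sons (T.pred x)).card := Finset.one_lt_card.2 ⟨b, hb, x, hx, hne⟩
    have : T.deg (T.pred x) = (T.sons (T.pred x)).card := rfl
    omega
  rw [hm.flow (T.pred x), this, Finset.sum_singleton]

lemma branch_step (hm : IsFlow T m) {A : ℝ}
    (hA : ∀ y : V, m (T.pred y) ≤ ENNReal.ofReal A * m y)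
    {x : V} (h : 2 ≤ T.deg (T.pred x)) :
    m x + (ENNReal.ofReal A)⁻¹ * m (T.pred x) ≤ m (T.pred x) := by
  have hx : x ∈ T.sons (T.pred x) := (mem_sons T).2 rfl
  have hcard : 1 < (T.sons (T.pred x)).card := by
    have : T.deg (T.pred x) = (T.sons (T.pred x)).card := rfl
    omega
  obtain ⟨w, hw, hwx⟩ := Finset.exists_mem_ne hcard x
  have hsum : m x + m w ≤ m (T.pred x) := by
    rw [hm.flow (T.pred x), ← Finset.sum_pair (Ne.symm hwx)]
    refine Finset.sum_le_sum_of_subset ?_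
    intro t ht
    simp only [Finset.mem_insert, Finset.mem_singleton] at ht
    rcases ht with rfl | rfl <;> assumption
  have hw2 : (ENNReal.ofReal A)⁻¹ * m (T.pred x) ≤ m w := by
    have h3 := hA w
    rw [(mem_sons T).1 hw] at h3
    rw [← ENNReal.div_eq_inv_mul]
    exact ENNReal.div_le_of_le_mul' h3
  exact le_trans (add_le_add_right hw2 (m x)) hsum

/-- Lower growth bound along the ancestor chain. -/
lemma chain_lower (hm : IsFlow T m) {A : ℝ}
    (hA : ∀ y : V, m (T.pred y) ≤ ENNReal.ofReal A * m y) (y : V) :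
    ∀ n : ℕ, m y + (bc T y n : ℝ≥0∞) * ((ENNReal.ofReal A)⁻¹ * m y) ≤ m (T.pred^[n] y) := by
  intro n; induction n with
  | zero => simp [bc_zero]
  | succ k ih =>
    rw [bc_succ]
    by_cases hbr : 2 ≤ T.deg (T.pred^[k + 1] y)
    · simp only [hbr, if_true]
      have hbr' : 2 ≤ T.deg (T.pred (T.pred^[k] y)) := by
        rwa [Function.iterate_succ_apply'] at hbr
      have hstep := branch_step T m hm hA (x := T.pred^[k] y) hbr'
      have hmono : m y ≤ m (T.pred (T.pred^[k] y)) := by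
        simpa [Function.iterate_succ_apply'] using mono_iter T m hm y (Nat.zero_le (k+1))
      rw [Function.iterate_succ_apply']
      push_cast
      calc m y + ((bc T y k : ℝ≥0∞) + 1) * ((ENNReal.ofReal A)⁻¹ * m y)
          = (m y + (bc T y k : ℝ≥0∞) * ((ENNReal.ofReal A)⁻¹ * m y))
            + (ENNReal.ofReal A)⁻¹ * m y := by ring
        _ ≤ m (T.pred^[k] y) + (ENNReal.ofReal A)⁻¹ * m (T.pred (T.pred^[k] y)) :=
            add_le_add ih (mul_le_mul_right hmono _)
        _ ≤ m (T.pred (T.pred^[k] y)) := hstep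
    · simp only [hbr, if_false]
      have hd : T.deg (T.pred (T.pred^[k] y)) ≤ 1 := by
        rw [Function.iterate_succ_apply'] at hbr; omega
      rw [Function.iterate_succ_apply', deg_one_step T m hm hd]
      simpa using ih

/-- Upper growth bound along the ancestor chain. -/
lemma chain_upper (hm : IsFlow T m) {A : ℝ}
    (hA : ∀ y : V, m (T.pred y) ≤ ENNReal.ofReal A * m y) (y : V) :
    ∀ n : ℕ, m (T.pred^[n] y) ≤ (ENNReal.ofReal A) ^ (bc T y n) * m y := by
  intro n; induction n with
  | zero => simp [bc_zero]
  | succ k ih =>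
    rw [bc_succ]
    by_cases hbr : 2 ≤ T.deg (T.pred^[k + 1] y)
    · simp only [hbr, if_true]
      rw [Function.iterate_succ_apply']
      calc m (T.pred (T.pred^[k] y)) ≤ ENNReal.ofReal A * m (T.pred^[k] y) := hA _
        _ ≤ ENNReal.ofReal A * ((ENNReal.ofReal A) ^ (bc T y k) * m y) :=
            mul_le_mul_right ih _
        _ = (ENNReal.ofReal A) ^ (bc T y k + 1) * m y := by ring
    · simp only [hbr, if_false]
      have hd : T.deg (T.pred (T.pred^[k] y)) ≤ 1 := by
        rw [Function.iterate_succ_apply'] at hbr; omega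
      rw [Function.iterate_succ_apply', deg_one_step T m hm hd]
      simpa using ih

end Aux3

end FlowPaper
namespace FlowPaper

variable {V : Type u}

section Aux4

variable (T : Tree V)

/-- The ascending chain `[y, p y, p² y, …]` of length `n`. -/
def chainL (y : V) (n : ℕ) : List V := (List.range n).map (fun j => T.pred^[j] y)

lemma chainL_succ (y : V) (n : ℕ) :
    chainL T y (n + 1) = y :: chainL T (T.pred y) n := by
  unfold chainL
  rw [List.range_succ_eq_map, List.map_cons, List.map_map]
  rfl

lemma chainL_geo (y : V) (n : ℕ) : IsGeodesic T (chainL T y n) := by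
  constructor
  · exact (List.nodup_range (n := n)).map (up_inj T y)
  · unfold chainL
    simp only [List.Chain', List.isChain_map]
    cases n with
    | zero => simp
    | succ k =>
      rw [List.isChain_range_succ]
      intro i _
      exact Or.inl (by rw [Function.iterate_succ_apply'])

lemma branchCount_chainL (y : V) :
    ∀ n : ℕ, branchCount T (chainL T y (n + 1))
      = (if 2 ≤ T.deg y then 1 else 0) + bc T y n := by
  intro n; induction n with
  | zero =>
    unfold branchCount chainL bc
    simp [List.countP_cons]
  | succ k ih =>
    have hsplit : chainL T y (k + 1 + 1) = chainL T y (k + 1) ++ [T.pred^[k+1] y] := by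
      unfold chainL
      rw [List.range_succ, List.map_append]
      rfl
    unfold branchCount at ih ⊢
    rw [hsplit, List.countP_append, ih, bc_succ]
    simp only [List.countP_cons, List.countP_nil, decide_eq_true_eq]
    split_ifs <;> omega

lemma bc_le_branchCount (y : V) (n : ℕ) :
    bc T y n ≤ branchCount T (chainL T y (n + 1)) := by
  rw [branchCount_chainL]; omega

lemma asc_count {K : ℕ} (hK : ∀ (y : V) (n : ℕ), bc T y n ≤ K) :
    ∀ u : List V, List.Chain' (fun a b => b = T.pred a) u → branchCount T u ≤ K + 1 := by
  intro u hu
  cases u with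
  | nil => simp [branchCount]
  | cons y t =>
    have hc : y :: t = chainL T y (t.length + 1) := by
      clear hK
      induction t generalizing y with
      | nil => simp [chainL]
      | cons b t' ih =>
        simp only [List.Chain', List.isChain_cons_cons] at hu
        have hb : b = T.pred y := hu.1
        subst hb
        have h2 := ih (T.pred y) hu.2
        rw [chainL_succ, List.length_cons, ← h2]
    rw [hc, branchCount_chainL]
    have := hK y t.length
    split_ifs <;> omega

lemma desc_of_down : ∀ (t : List V) (a b : V), List.Chain' T.Adj (a :: b :: t) →
    (a :: b :: t).Nodup → a = T.pred b →
    List.Chain' (fun u v => u = T.pred v) (a :: b :: t) := by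
  intro t
  induction t with
  | nil => intro a b _ _ hab; exact List.isChain_pair.2 hab
  | cons c t' ih =>
    intro a b hchain hnodup hab
    simp only [List.Chain'] at hchain; rw [List.isChain_cons_cons] at hchain
    have hadj := (List.isChain_cons_cons.1 hchain.2).1
    have hbc : b = T.pred c := by
      rcases hadj with h | h
      · exfalso
        have hac : a = c := hab.trans h
        have hnotin : a ∉ b :: c :: t' := (List.nodup_cons.1 hnodup).1
        exact hnotin (by rw [hac]; exact List.mem_cons_of_mem _ (List.mem_cons_self))
      · exact h.symm
    exact List.isChain_cons_cons.2 ⟨hab, ih b c hchain.2 (List.nodup_cons.1 hnodup).2 hbc⟩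

lemma split_geo : ∀ (l : List V), List.Chain' T.Adj l → l.Nodup →
    ∃ l1 l2 : List V, l = l1 ++ l2 ∧
      List.Chain' (fun a b => b = T.pred a) (l1 ++ l2.take 1) ∧
      List.Chain' (fun u v => u = T.pred v) l2 := by
  intro l
  induction l with
  | nil => intro _ _; exact ⟨[], [], by simp, by simp [List.Chain'], by simp [List.Chain']⟩
  | cons a t ih =>
    intro hchain hnodup
    cases t with
    | nil => exact ⟨[a], [], by simp, by simp [List.Chain'], by simp [List.Chain']⟩
    | cons b t' =>
      rcases (List.isChain_cons_cons.1 hchain).1 with h | h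
      · -- up step : T.pred a = b
        obtain ⟨l1, l2, heq, hasc, hdesc⟩ :=
          ih (List.isChain_cons_cons.1 hchain).2 (List.nodup_cons.1 hnodup).2
        refine ⟨a :: l1, l2, by rw [List.cons_append, ← heq], ?_, hdesc⟩
        rw [List.cons_append]
        apply List.isChain_cons.2
        refine ⟨?_, hasc⟩
        intro h' hh'
        have hhead : (l1 ++ l2.take 1).head? = some b := by
          cases l1 with
          | nil =>
            simp only [List.nil_append] at heq ⊢
            rw [← heq]
            rfl
          | cons c s =>
            rw [List.cons_append] at heq
            injection heq with h1 _
            subst h1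
            rfl
        rw [hhead] at hh'
        cases hh'
        exact h.symm
      · -- down step : T.pred b = a
        exact ⟨[], a :: b :: t', by simp, by simp [List.Chain'],
          desc_of_down T t' a b hchain hnodup h.symm⟩

lemma geo_bound {K : ℕ} (hK : ∀ (y : V) (n : ℕ), bc T y n ≤ K) :
    ∀ l : List V, IsGeodesic T l → branchCount T l ≤ 2 * K + 2 := by
  intro l hl
  obtain ⟨l1, l2, heq, hasc, hdesc⟩ := split_geo T l hl.2 hl.1
  have h1 : branchCount T l1 ≤ K + 1 := by
    have := asc_count T hK (l1 ++ l2.take 1) hasc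
    unfold branchCount at this ⊢
    rw [List.countP_append] at this
    omega
  have h2 : branchCount T l2 ≤ K + 1 := by
    have hrev : List.Chain' (fun a b => b = T.pred a) l2.reverse :=
      List.isChain_reverse.2 hdesc
    have := asc_count T hK l2.reverse hrev
    unfold branchCount at this ⊢
    rw [(l2.reverse_perm).countP_eq] at this
    omega
  rw [heq]
  unfold branchCount at h1 h2 ⊢
  rw [List.countP_append]
  omega

end Aux4

end FlowPaper
namespace FlowPaper

variable {V : Type u}

section Aux5

variable (T : Tree V) (m : V → ℝ≥0∞)

lemma bc_bound_of_doubling (hm : IsFlow T m) {A C : ℝ} (hA1 : 1 ≤ A)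
    (hA : ∀ y, m (T.pred y) ≤ ENNReal.ofReal A * m y) (hC : 1 < C)
    (hD : ∀ (r : ℕ) (x : V), 0 < r →
      mst m (T.ball x (2 * r)) ≤ ENNReal.ofReal C * mst m (T.ball x r)) :
    ∀ (y : V) (n : ℕ), bc T y n ≤ Nat.ceil (C * 4 * A) := by
  intro y n
  rcases Nat.eq_zero_or_pos n with rfl | hn
  · rw [bc_zero]; exact Nat.zero_le _
  set N := bc T y n with hN
  set Ae := ENNReal.ofReal A with hAe
  have hAe0 : Ae ≠ 0 := by
    rw [hAe]
    simp only [ne_eq, ENNReal.ofReal_eq_zero, not_le]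
    linarith
  have hAet : Ae ≠ ⊤ := ENNReal.ofReal_ne_top
  set L := m y + (N : ℝ≥0∞) * (Ae⁻¹ * m y) with hL
  obtain ⟨u, hu⟩ := exists_desc T y (2 * n)
  have hub : mst m (T.ball u (2 * n)) ≤ ((2 * (2 * n) + 1 : ℕ) : ℝ≥0∞) * m y := by
    have := ball_ub T m hm u (2 * n)
    rwa [hu] at this
  have hlb1 : ∑ j ∈ Finset.range (2 * (2 * n) + 1), m (T.pred^[j] u)
      ≤ mst m (T.ball u (2 * (2 * n))) := ball_lb T m u (2 * (2 * n))
  have hterm : ∀ j ∈ Finset.Icc (3 * n) (4 * n), L ≤ m (T.pred^[j] u) := by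
    intro j hj
    rw [Finset.mem_Icc] at hj
    have hj2n : T.pred^[j] u = T.pred^[j - 2 * n] y := by
      rw [← hu, ← Function.iterate_add_apply]
      congr 1
      omega
    rw [hj2n]
    calc L ≤ m (T.pred^[n] y) := chain_lower T m hm hA y n
      _ ≤ m (T.pred^[j - 2 * n] y) := mono_iter T m hm y (by omega)
  have hsum : ((n + 1 : ℕ) : ℝ≥0∞) * L
      ≤ ∑ j ∈ Finset.range (2 * (2 * n) + 1), m (T.pred^[j] u) := by
    have hsub : Finset.Icc (3 * n) (4 * n) ⊆ Finset.range (2 * (2 * n) + 1) := by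
      intro j hj
      rw [Finset.mem_Icc] at hj
      rw [Finset.mem_range]
      omega
    calc ((n + 1 : ℕ) : ℝ≥0∞) * L = ∑ _j ∈ Finset.Icc (3 * n) (4 * n), L := by
          rw [Finset.sum_const, Nat.card_Icc, nsmul_eq_mul]
          congr 2
          omega
      _ ≤ ∑ j ∈ Finset.Icc (3 * n) (4 * n), m (T.pred^[j] u) := Finset.sum_le_sum hterm
      _ ≤ ∑ j ∈ Finset.range (2 * (2 * n) + 1), m (T.pred^[j] u) :=
          Finset.sum_le_sum_of_subset hsub
  have hmain : ((n + 1 : ℕ) : ℝ≥0∞) * L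
      ≤ ((n + 1 : ℕ) : ℝ≥0∞) * (ENNReal.ofReal C * 4 * m y) := by
    calc ((n + 1 : ℕ) : ℝ≥0∞) * L
        ≤ mst m (T.ball u (2 * (2 * n))) := hsum.trans hlb1
      _ ≤ ENNReal.ofReal C * mst m (T.ball u (2 * n)) := hD (2 * n) u (by omega)
      _ ≤ ENNReal.ofReal C * (((2 * (2 * n) + 1 : ℕ) : ℝ≥0∞) * m y) :=
          mul_le_mul_right hub _
      _ ≤ ENNReal.ofReal C * (((4 * (n + 1) : ℕ) : ℝ≥0∞) * m y) :=
          mul_le_mul_right (mul_le_mul_left (Nat.cast_le.2 (by omega)) _) _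
      _ = ((n + 1 : ℕ) : ℝ≥0∞) * (ENNReal.ofReal C * 4 * m y) := by
          push_cast
          ring
  have hc1 : L ≤ ENNReal.ofReal C * 4 * m y := by
    have hne0 : ((n + 1 : ℕ) : ℝ≥0∞) ≠ 0 := by
      simp
    have hnet : ((n + 1 : ℕ) : ℝ≥0∞) ≠ ⊤ := ENNReal.natCast_ne_top _
    exact (ENNReal.mul_le_mul_iff_right hne0 hnet).1 hmain
  have hc2 : (N : ℝ≥0∞) * Ae⁻¹ * m y ≤ ENNReal.ofReal C * 4 * m y := by
    refine le_trans ?_ hc1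
    rw [hL, mul_assoc]
    exact le_add_self
  have hc3 : (N : ℝ≥0∞) * Ae⁻¹ ≤ ENNReal.ofReal C * 4 :=
    (ENNReal.mul_le_mul_iff_left (hm.pos y).ne' (hm.fin y).ne).1 hc2
  have hc4 : (N : ℝ≥0∞) ≤ ENNReal.ofReal C * 4 * Ae := by
    have := mul_le_mul_left hc3 Ae
    rwa [mul_assoc, ENNReal.inv_mul_cancel hAe0 hAet, mul_one] at this
  have hc5 : (N : ℝ≥0∞) ≤ ENNReal.ofReal (C * 4 * A) := by
    rw [ENNReal.ofReal_mul (by positivity : (0:ℝ) ≤ C * 4),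
      ENNReal.ofReal_mul (by linarith : (0:ℝ) ≤ C)]
    simpa [hAe] using hc4
  have hc6 : (N : ℝ) ≤ C * 4 * A := by
    rw [← ENNReal.ofReal_natCast N] at hc5
    exact (ENNReal.ofReal_le_ofReal_iff (by positivity)).1 hc5
  calc N = Nat.ceil ((N : ℝ)) := (Nat.ceil_natCast N).symm
    _ ≤ Nat.ceil (C * 4 * A) := Nat.ceil_le_ceil hc6

end Aux5

end FlowPaper
namespace FlowPaper

variable {V : Type u}

section Aux6

variable (T : Tree V) (m : V → ℝ≥0∞)

lemma window_upper (hm : IsFlow T m) {A : ℝ}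
    (hA : ∀ y, m (T.pred y) ≤ ENNReal.ofReal A * m y) {M : ℕ}
    (hbc : ∀ (y : V) (n : ℕ), bc T y n ≤ M) (hA1 : 1 ≤ A)
    (x : V) {j r : ℕ} (hj : j ≤ r) :
    m (T.pred^[r] x) ≤ (ENNReal.ofReal A) ^ M * m (T.pred^[j] x) := by
  have heq : T.pred^[r] x = T.pred^[r - j] (T.pred^[j] x) := by
    rw [← Function.iterate_add_apply]
    congr 1
    omega
  rw [heq]
  calc m (T.pred^[r - j] (T.pred^[j] x))
      ≤ (ENNReal.ofReal A) ^ (bc T (T.pred^[j] x) (r - j)) * m (T.pred^[j] x) :=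
        chain_upper T m hm hA _ _
    _ ≤ (ENNReal.ofReal A) ^ M * m (T.pred^[j] x) := by
        refine mul_le_mul_left (pow_le_pow_right₀ ?_ (hbc _ _)) _
        exact ENNReal.one_le_ofReal.2 hA1

lemma doubling_of_bound (hm : IsFlow T m) {A : ℝ} (hA1 : 1 ≤ A)
    (hA : ∀ y, m (T.pred y) ≤ ENNReal.ofReal A * m y) (M : ℕ)
    (hbc : ∀ (y : V) (n : ℕ), bc T y n ≤ M) : Doubling T m := by
  refine ⟨4 * A ^ (2 * M), ?_, ?_⟩
  · have h1 : (1 : ℝ) ≤ A ^ (2 * M) := one_le_pow₀ hA1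
    nlinarith
  intro r x hr
  set Ae := ENNReal.ofReal A with hAe
  have hofreal : ENNReal.ofReal (4 * A ^ (2 * M)) = 4 * Ae ^ (2 * M) := by
    rw [ENNReal.ofReal_mul (by norm_num : (0:ℝ) ≤ 4),
      ENNReal.ofReal_pow (by linarith : (0:ℝ) ≤ A)]
    norm_num
    rfl
  rw [hofreal]
  have hup : ((r + 1 : ℕ) : ℝ≥0∞) * m (T.pred^[r] x) ≤ Ae ^ M * mst m (T.ball x r) := by
    calc ((r + 1 : ℕ) : ℝ≥0∞) * m (T.pred^[r] x)
        = ∑ _j ∈ Finset.range (r + 1), m (T.pred^[r] x) := by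
          rw [Finset.sum_const, Finset.card_range, nsmul_eq_mul]
      _ ≤ ∑ j ∈ Finset.range (r + 1), Ae ^ M * m (T.pred^[j] x) := by
          refine Finset.sum_le_sum ?_
          intro j hj
          rw [Finset.mem_range] at hj
          exact window_upper T m hm hA hbc hA1 x (by omega)
      _ = Ae ^ M * ∑ j ∈ Finset.range (r + 1), m (T.pred^[j] x) := by
          rw [Finset.mul_sum]
      _ ≤ Ae ^ M * mst m (T.ball x r) := mul_le_mul_right (ball_lb T m x r) _
  calc mst m (T.ball x (2 * r))
      ≤ ((2 * (2 * r) + 1 : ℕ) : ℝ≥0∞) * m (T.pred^[2 * r] x) := ball_ub T m hm x (2 * r)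
    _ ≤ ((2 * (2 * r) + 1 : ℕ) : ℝ≥0∞) * (Ae ^ M * m (T.pred^[r] x)) :=
        mul_le_mul_right (window_upper T m hm hA hbc hA1 x (by omega)) _
    _ ≤ ((4 * (r + 1) : ℕ) : ℝ≥0∞) * (Ae ^ M * m (T.pred^[r] x)) :=
        mul_le_mul_left (Nat.cast_le.2 (by omega)) _
    _ = 4 * Ae ^ M * (((r + 1 : ℕ) : ℝ≥0∞) * m (T.pred^[r] x)) := by
        push_cast
        ring
    _ ≤ 4 * Ae ^ M * (Ae ^ M * mst m (T.ball x r)) := mul_le_mul_right hup _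
    _ = 4 * Ae ^ (2 * M) * mst m (T.ball x r) := by
        rw [← mul_assoc, mul_assoc 4, ← pow_add]
        congr 3
        omega

end Aux6

end FlowPaper
namespace FlowPaper

/-- a locally doubling flow measure is doubling iff the number of
branch vertices along geodesics is uniformly bounded. -/
theorem statement4 {V : Type u} [Countable V] [Infinite V] (T : Tree V)
    (m : V → ℝ≥0∞) (hm : IsFlow T m) (hld : LocDoubling T m) :
    Doubling T m ↔
      ∃ M : ℕ, ∀ l : List V, IsGeodesic T l → branchCount T l ≤ M := by
  obtain ⟨A, hA1, hA⟩ := exists_A T m hm hld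
  constructor
  · rintro ⟨C, hC, hD⟩
    refine ⟨2 * Nat.ceil (C * 4 * A) + 2, ?_⟩
    exact geo_bound T (fun y n => bc_bound_of_doubling T m hm hA1 hA hC hD y n)
  · rintro ⟨M, hM⟩
    exact doubling_of_bound T m hm hA1 hA M
      (fun y n => le_trans (bc_le_branchCount T y n) (hM _ (chainL_geo T y (n + 1))))

end FlowPaper
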